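/- Let $k,n,l\in\mathbb{N}$ with $n>2l$ and let $R\in\mathbb{R}$ with $R>n$. Then there do not exist families $\mathcal{V}_1,\dots,\mathcal{V}_k$ of subsets of $(l\mathbb{Z})^k$ (with the maximum metric) such that each $\mathcal{V}_i$ is $n$-disjoint and $R$-bounded and $\bigcup_{i=1}^k \mathcal{V}_i$ covers $[-R,R]^k\cap(l\mathbb{Z})^k$. -/
import Mathlib


noncomputable section
open Metric Set
open scoped ENNReal

/-- A family of subsets is `R`-bounded if every member has diameter at most `R`. -/
def RBounded {X : Type*} [PseudoMetricSpace X] (R : ℝ) (U : Set (Set X)) : Prop :=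
  ∀ A ∈ U, ∀ x ∈ A, ∀ y ∈ A, dist x y ≤ R

/-- A family of subsets is `r`-disjoint if distinct members are at distance at least `r`. -/
def RDisjoint {X : Type*} [PseudoMetricSpace X] (r : ℝ) (U : Set (Set X)) : Prop :=
  ∀ A ∈ U, ∀ B ∈ U, A ≠ B → ∀ x ∈ A, ∀ y ∈ B, r ≤ dist x y

/-- A family of subsets is uniformly bounded if it is `R`-bounded for some `R`. -/
def UniformlyBounded {X : Type*} [PseudoMetricSpace X] (U : Set (Set X)) : Prop :=
  ∃ R : ℝ, RBounded R U

/-- `asdim X ≤ n`: for every `r > 0` there are `n+1` uniformly bounded, `r`-disjoint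
families of subsets of `X` whose union covers `X`. -/
def AsdimLE (X : Type*) [PseudoMetricSpace X] (n : ℕ) : Prop :=
  ∀ r : ℝ, 0 < r → ∃ U : Fin (n + 1) → Set (Set X),
    (∀ i, UniformlyBounded (U i)) ∧ (∀ i, RDisjoint r (U i)) ∧
    (Set.univ : Set X) ⊆ ⋃ i, ⋃₀ U i


open Finset

 namespace CubeSperner

open Classical in
/-- Lemma A: parity of the number of "door" facets of a simplex equals the rainbow indicator. -/
theorem doorsum {n : ℕ} (f : Fin (n+1) → Fin (n+1)) :
    (∑ j : Fin (n+1), if (Finset.univ.erase j).image f = Finset.univ.erase (Fin.last n)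
      then (1 : ZMod 2) else 0) =
    if Function.Surjective f then 1 else 0 := by
  classical
  by_cases hs : Function.Surjective f
  · have hinj : Function.Injective f := (Finite.injective_iff_surjective).2 hs
    obtain ⟨j₀, hj₀⟩ := hs (Fin.last n)
    have hcond : ∀ j : Fin (n+1),
        ((Finset.univ.erase j).image f = Finset.univ.erase (Fin.last n)) ↔ j = j₀ := by
      intro j
      rw [Finset.image_erase hinj, Finset.image_univ_of_surjective hs]
      constructor
      · intro h
        have hfj : f j = Fin.last n := by
          by_contra hne
          have hmem : f j ∈ Finset.univ.erase (Fin.last n) :=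
            Finset.mem_erase.2 ⟨hne, Finset.mem_univ _⟩
          rw [← h] at hmem
          exact absurd rfl (Finset.mem_erase.1 hmem).1
        exact hinj (hfj.trans hj₀.symm)
      · rintro rfl; rw [hj₀]
    rw [if_pos hs]
    calc (∑ j : Fin (n+1), if (Finset.univ.erase j).image f = Finset.univ.erase (Fin.last n)
        then (1 : ZMod 2) else 0)
        = ∑ j : Fin (n+1), if j = j₀ then (1 : ZMod 2) else 0 := by
          refine Finset.sum_congr rfl fun j _ => ?_
          simp [hcond j]
      _ = 1 := by simp
  · rw [if_neg hs]
    by_cases hD : Finset.univ.erase (Fin.last n) ⊆ Finset.univ.image f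
    · -- image of f is exactly the "door" set; count the fiber of the duplicated value
      have hlast : Fin.last n ∉ Finset.univ.image f := by
        intro hmem
        apply hs
        intro a
        by_cases ha : a = Fin.last n
        · obtain ⟨b, _, hb⟩ := Finset.mem_image.1 hmem
          exact ⟨b, ha ▸ hb⟩
        · obtain ⟨b, _, hb⟩ := Finset.mem_image.1
            (hD (Finset.mem_erase.2 ⟨ha, Finset.mem_univ _⟩))
          exact ⟨b, hb⟩
      have himg : Finset.univ.image f = Finset.univ.erase (Fin.last n) := by
        apply Finset.Subset.antisymm
        · intro a ha
          exact Finset.mem_erase.2 ⟨fun h => hlast (h ▸ ha), Finset.mem_univ _⟩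
        · exact hD
      have hninj : ¬ Function.Injective f := by
        intro hinj
        have h1 : (Finset.univ.image f).card = n + 1 := by
          rw [Finset.card_image_of_injective _ hinj, Finset.card_univ, Fintype.card_fin]
        rw [himg, Finset.card_erase_of_mem (Finset.mem_univ _), Finset.card_univ,
          Fintype.card_fin] at h1
        omega
      obtain ⟨j₁, j₂, hfeq, hne⟩ := Function.not_injective_iff.1 hninj
      -- key: if the facet at j is a door, then f is injective on univ.erase j
      have hinjOn : ∀ j : Fin (n+1),
          (Finset.univ.erase j).image f = Finset.univ.erase (Fin.last n) →
          Set.InjOn f (Finset.univ.erase j) := by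
        intro j hj
        apply Finset.injOn_of_card_image_eq
        rw [hj, Finset.card_erase_of_mem (Finset.mem_univ _),
          Finset.card_erase_of_mem (Finset.mem_univ _)]
      have hdoorj : ∀ j : Fin (n+1), f j = f j₁ →
          (Finset.univ.erase j).image f = Finset.univ.erase (Fin.last n) := by
        intro j hj
        apply Finset.Subset.antisymm
        · intro a ha
          rw [← himg]
          exact Finset.image_subset_image (Finset.erase_subset _ _) ha
        · intro a ha
          rw [← himg] at ha
          obtain ⟨b, _, hb⟩ := Finset.mem_image.1 ha
          by_cases hbj : b = j
          · -- a = f j = f j₁ = f j₂ ; one of j₁, j₂ differs from j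
            by_cases h1j : j₁ = j
            · refine Finset.mem_image.2 ⟨j₂, Finset.mem_erase.2 ⟨fun h => hne ((h1j.trans h.symm)),
                Finset.mem_univ _⟩, ?_⟩
              rw [← hfeq, ← hj, ← hbj, hb]
            · exact Finset.mem_image.2 ⟨j₁, Finset.mem_erase.2 ⟨h1j, Finset.mem_univ _⟩,
                by rw [← hj, ← hbj, hb]⟩
          · exact Finset.mem_image.2 ⟨b, Finset.mem_erase.2 ⟨hbj, Finset.mem_univ _⟩, hb⟩
      have hcond : ∀ j : Fin (n+1),
          ((Finset.univ.erase j).image f = Finset.univ.erase (Fin.last n)) ↔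
            (j = j₁ ∨ j = j₂) := by
        intro j
        constructor
        · intro hj
          by_contra hc
          push_neg at hc
          -- f j ≠ f j₁ : otherwise injectivity on erase j₁ gives j = j₂
          have hfj : f j ≠ f j₁ := by
            intro hfj
            have hd1 := hinjOn j₁ (hdoorj j₁ rfl)
            have : j = j₂ :=
              hd1 (Finset.mem_coe.2 (Finset.mem_erase.2 ⟨hc.1, Finset.mem_univ _⟩))
                (Finset.mem_coe.2 (Finset.mem_erase.2 ⟨Ne.symm hne, Finset.mem_univ _⟩))
                (hfj.trans hfeq)
            exact hc.2 this
          -- but then j₁, j₂ ∈ erase j and injectivity on erase j gives j₁ = j₂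
          have hd := hinjOn j hj
          exact hne (hd
            (Finset.mem_coe.2 (Finset.mem_erase.2
              ⟨fun h => hfj (congrArg f h).symm, Finset.mem_univ _⟩))
            (Finset.mem_coe.2 (Finset.mem_erase.2
              ⟨fun h => hfj (((congrArg f h).symm).trans hfeq.symm), Finset.mem_univ _⟩))
            hfeq)
        · intro hj
          rcases hj with rfl | rfl
          · exact hdoorj _ rfl
          · exact hdoorj _ hfeq.symm
      calc (∑ j : Fin (n+1), if (Finset.univ.erase j).image f = Finset.univ.erase (Fin.last n)
          then (1 : ZMod 2) else 0)
          = ∑ j : Fin (n+1), if j ∈ ({j₁, j₂} : Finset (Fin (n+1))) then (1 : ZMod 2) else 0 := by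
            refine Finset.sum_congr rfl fun j _ => ?_
            simp only [hcond j, Finset.mem_insert, Finset.mem_singleton]
        _ = ∑ j ∈ ({j₁, j₂} : Finset (Fin (n+1))), (1 : ZMod 2) := by
            rw [Finset.sum_ite_mem, Finset.univ_inter]
        _ = 0 := by
            rw [Finset.sum_const, Finset.card_pair hne]
            decide
    · -- some door value is never attained: no doors at all
      have : ∀ j : Fin (n+1),
          ¬ ((Finset.univ.erase j).image f = Finset.univ.erase (Fin.last n)) := by
        intro j hj
        apply hD
        rw [← hj]
        exact Finset.image_subset_image (Finset.erase_subset _ _) |>.trans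
          (Finset.image_subset_image (Finset.subset_univ _))
      refine (Finset.sum_congr rfl fun j _ => if_neg (this j)).trans (by simp)



/-- A Kuhn simplex in the grid `{0,…,N}^m`: a base point (with coordinates `< N`) together
with a permutation giving, for each direction, its position in the chain of increments. -/
abbrev SimpT (m N : ℕ) := (Fin m → Fin N) × Equiv.Perm (Fin m)

/-- The `j`-th vertex of a Kuhn simplex. -/
def vert {m N : ℕ} (s : SimpT m N) (j : Fin (m+1)) : Fin m → ℕ :=
  fun d => (s.1 d : ℕ) + if ((s.2 d : ℕ) < (j : ℕ)) then 1 else 0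

lemma vert_le {m N : ℕ} (s : SimpT m N) (j : Fin (m+1)) (d : Fin m) : vert s j d ≤ N := by
  have := (s.1 d).isLt
  unfold vert; split_ifs <;> omega

/-- The rotation `0 ↦ last, i ↦ i - 1` on `Fin (k+1)`. -/
def rotE (k : ℕ) : Equiv.Perm (Fin (k+1)) where
  toFun i := if (i : ℕ) = 0 then Fin.last k else ⟨(i:ℕ) - 1, by have := i.isLt; omega⟩
  invFun i := if h : (i : ℕ) = k then ⟨0, Nat.succ_pos k⟩
    else ⟨(i:ℕ) + 1, by have := i.isLt; omega⟩
  left_inv i := by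
    have hi := i.isLt
    dsimp only
    by_cases h : (i : ℕ) = 0
    · rw [if_pos h, dif_pos (by simp)]
      exact Fin.ext h.symm
    · rw [if_neg h, dif_neg (by dsimp only; omega)]
      exact Fin.ext (by dsimp only; omega)
  right_inv i := by
    have hi := i.isLt
    dsimp only
    by_cases h : (i : ℕ) = k
    · rw [dif_pos h, if_pos rfl]
      exact Fin.ext (by simp [h])
    · rw [dif_neg h, if_neg (by dsimp only; omega)]
      exact Fin.ext (by dsimp only; omega)

lemma rotE_val {k : ℕ} (i : Fin (k+1)) :
    ((rotE k) i : ℕ) = if (i : ℕ) = 0 then k else (i:ℕ) - 1 := by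
  show ((if (i : ℕ) = 0 then Fin.last k else ⟨(i:ℕ) - 1, _⟩ : Fin (k+1)) : ℕ) = _
  split_ifs <;> simp

lemma rotE_symm_val {k : ℕ} (i : Fin (k+1)) :
    ((rotE k).symm i : ℕ) = if (i : ℕ) = k then 0 else (i:ℕ) + 1 := by
  show ((if h : (i : ℕ) = k then ⟨0, _⟩ else ⟨(i:ℕ) + 1, _⟩ : Fin (k+1)) : ℕ) = _
  split_ifs <;> simp

lemma rotE_symm_last {k : ℕ} : (rotE k).symm (Fin.last k) = 0 :=
  Fin.ext (by rw [rotE_symm_val]; simp)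

lemma rotE_zero {k : ℕ} : (rotE k) 0 = Fin.last k :=
  Fin.ext (by rw [rotE_val]; simp)

/-- Partner operation across the facet obtained by dropping vertex `0`. -/
def rotS {k N : ℕ} (s : SimpT (k+1) N) : SimpT (k+1) N :=
  (fun d => if d = s.2.symm 0 then
      ⟨min ((s.1 d : ℕ) + 1) (N - 1), by have := (s.1 d).isLt; omega⟩ else s.1 d,
   s.2.trans (rotE k))

/-- Partner operation across the facet obtained by dropping the last vertex. -/
def unrotS {k N : ℕ} (s : SimpT (k+1) N) : SimpT (k+1) N :=
  (fun d => if d = s.2.symm (Fin.last k) then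
      ⟨(s.1 d : ℕ) - 1, by have := (s.1 d).isLt; omega⟩ else s.1 d,
   s.2.trans (rotE k).symm)

/-- Partner operation across an interior facet: swap the two adjacent increments. -/
def midS {k N : ℕ} (s : SimpT (k+1) N) (j : Fin (k+2)) : SimpT (k+1) N :=
  (s.1, s.2.trans (Equiv.swap ⟨(j:ℕ) - 1, by have := j.isLt; omega⟩
    ⟨min (j:ℕ) k, by omega⟩))

lemma rotS_base_val {k N : ℕ} (s : SimpT (k+1) N) (d : Fin (k+1)) :
    ((rotS s).1 d : ℕ) =
      if d = s.2.symm 0 then min ((s.1 d : ℕ) + 1) (N - 1) else (s.1 d : ℕ) := by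
  simp only [rotS]; split_ifs <;> rfl

lemma rotS_perm_val {k N : ℕ} (s : SimpT (k+1) N) (d : Fin (k+1)) :
    ((rotS s).2 d : ℕ) = if (s.2 d : ℕ) = 0 then k else (s.2 d : ℕ) - 1 := by
  show ((s.2.trans (rotE k)) d : ℕ) = _
  rw [Equiv.trans_apply, rotE_val]

lemma unrotS_base_val {k N : ℕ} (s : SimpT (k+1) N) (d : Fin (k+1)) :
    ((unrotS s).1 d : ℕ) =
      if d = s.2.symm (Fin.last k) then (s.1 d : ℕ) - 1 else (s.1 d : ℕ) := by
  simp only [unrotS]; split_ifs <;> rfl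

lemma unrotS_perm_val {k N : ℕ} (s : SimpT (k+1) N) (d : Fin (k+1)) :
    ((unrotS s).2 d : ℕ) = if (s.2 d : ℕ) = k then 0 else (s.2 d : ℕ) + 1 := by
  show ((s.2.trans (rotE k).symm) d : ℕ) = _
  rw [Equiv.trans_apply, rotE_symm_val]

lemma tau_val_eq_zero_iff {k N : ℕ} (s : SimpT (k+1) N) (d : Fin (k+1)) :
    (s.2 d : ℕ) = 0 ↔ d = s.2.symm 0 := by
  constructor
  · intro h
    have : s.2 d = 0 := Fin.ext h
    rw [← this, Equiv.symm_apply_apply]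
  · intro h
    rw [h, Equiv.apply_symm_apply]
    rfl

lemma tau_val_eq_last_iff {k N : ℕ} (s : SimpT (k+1) N) (d : Fin (k+1)) :
    (s.2 d : ℕ) = k ↔ d = s.2.symm (Fin.last k) := by
  constructor
  · intro h
    have : s.2 d = Fin.last k := Fin.ext (by simpa using h)
    rw [← this, Equiv.symm_apply_apply]
  · intro h
    rw [h, Equiv.apply_symm_apply]
    simp

lemma rot_vert {k N : ℕ} (s : SimpT (k+1) N) (h : (s.1 (s.2.symm 0) : ℕ) + 1 < N)
    (i : Fin (k+1)) : vert (rotS s) i.castSucc = vert s i.succ := by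
  funext d
  have hiv := i.isLt
  have hτv := (s.2 d).isLt
  unfold vert
  rw [rotS_perm_val, rotS_base_val]
  simp only [Fin.coe_castSucc, Fin.val_succ]
  by_cases hd : d = s.2.symm 0
  · rw [← hd] at h
    have hτ0 : (s.2 d : ℕ) = 0 := (tau_val_eq_zero_iff s d).2 hd
    rw [if_pos hd, if_pos hτ0, hτ0]
    split_ifs <;> omega
  · have hτ0 : (s.2 d : ℕ) ≠ 0 := fun hc => hd ((tau_val_eq_zero_iff s d).1 hc)
    rw [if_neg hd, if_neg hτ0]
    split_ifs <;> omega

lemma unrot_vert {k N : ℕ} (s : SimpT (k+1) N) (h : 1 ≤ (s.1 (s.2.symm (Fin.last k)) : ℕ))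
    (i : Fin (k+1)) : vert (unrotS s) i.succ = vert s i.castSucc := by
  funext d
  have hiv := i.isLt
  have hτv := (s.2 d).isLt
  unfold vert
  rw [unrotS_perm_val, unrotS_base_val]
  simp only [Fin.coe_castSucc, Fin.val_succ]
  by_cases hd : d = s.2.symm (Fin.last k)
  · rw [← hd] at h
    have hτk : (s.2 d : ℕ) = k := (tau_val_eq_last_iff s d).2 hd
    rw [if_pos hd, if_pos hτk, hτk]
    split_ifs <;> omega
  · have hτk : (s.2 d : ℕ) ≠ k := fun hc => hd ((tau_val_eq_last_iff s d).1 hc)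
    rw [if_neg hd, if_neg hτk]
    split_ifs <;> omega

lemma rotS_symm_last {k N : ℕ} (s : SimpT (k+1) N) :
    (rotS s).2.symm (Fin.last k) = s.2.symm 0 := by
  show (s.2.trans (rotE k)).symm (Fin.last k) = _
  rw [Equiv.symm_trans_apply, rotE_symm_last]

lemma unrotS_symm_zero {k N : ℕ} (s : SimpT (k+1) N) :
    (unrotS s).2.symm 0 = s.2.symm (Fin.last k) := by
  show (s.2.trans (rotE k).symm).symm 0 = _
  rw [Equiv.symm_trans_apply, Equiv.symm_symm, rotE_zero]

lemma unrot_rot {k N : ℕ} (s : SimpT (k+1) N) (h : (s.1 (s.2.symm 0) : ℕ) + 1 < N) :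
    unrotS (rotS s) = s := by
  have hNpos : 0 < N := by omega
  apply Prod.ext
  · funext d
    apply Fin.ext
    rw [unrotS_base_val, rotS_symm_last, rotS_base_val]
    by_cases hd : d = s.2.symm 0
    · rw [← hd] at h
      simp only [if_pos hd]
      omega
    · simp only [if_neg hd]
  · show (s.2.trans (rotE k)).trans (rotE k).symm = s.2
    rw [Equiv.trans_assoc, Equiv.self_trans_symm, Equiv.trans_refl]

lemma rot_unrot {k N : ℕ} (s : SimpT (k+1) N) (h : 1 ≤ (s.1 (s.2.symm (Fin.last k)) : ℕ)) :
    rotS (unrotS s) = s := by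
  apply Prod.ext
  · funext d
    apply Fin.ext
    rw [rotS_base_val, unrotS_symm_zero, unrotS_base_val]
    by_cases hd : d = s.2.symm (Fin.last k)
    · rw [← hd] at h
      have := (s.1 d).isLt
      simp only [if_pos hd]
      omega
    · simp only [if_neg hd]
  · show (s.2.trans (rotE k).symm).trans (rotE k) = s.2
    rw [Equiv.trans_assoc, Equiv.symm_trans_self, Equiv.trans_refl]

lemma midS_perm_val {k N : ℕ} (s : SimpT (k+1) N) (j : Fin (k+2)) (hj0 : (j:ℕ) ≠ 0)
    (hjl : (j:ℕ) ≠ k+1) (d : Fin (k+1)) :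
    ((midS s j).2 d : ℕ) = if (s.2 d : ℕ) = (j:ℕ) - 1 then (j:ℕ)
      else if (s.2 d : ℕ) = (j:ℕ) then (j:ℕ) - 1 else (s.2 d : ℕ) := by
  have hjv := j.isLt
  have hmin : min (j:ℕ) k = (j:ℕ) := by omega
  simp only [midS, Equiv.trans_apply, Equiv.swap_apply_def, apply_ite (Fin.val), Fin.ext_iff]
  all_goals simp only [hmin]
  all_goals split_ifs <;> omega

lemma mid_vert {k N : ℕ} (s : SimpT (k+1) N) (j : Fin (k+2)) (hj0 : (j:ℕ) ≠ 0)
    (hjl : (j:ℕ) ≠ k+1) (i : Fin (k+2)) (hij : (i:ℕ) ≠ (j:ℕ)) :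
    vert (midS s j) i = vert s i := by
  funext d
  have hjv := j.isLt
  have hτv := (s.2 d).isLt
  unfold vert
  rw [midS_perm_val s j hj0 hjl d]
  show (s.1 d : ℕ) + _ = _
  congr 1
  split_ifs <;> omega

lemma midS_base {k N : ℕ} (s : SimpT (k+1) N) (j : Fin (k+2)) : (midS s j).1 = s.1 := rfl

lemma mid_mid {k N : ℕ} (s : SimpT (k+1) N) (j : Fin (k+2)) :
    midS (midS s j) j = s := by
  apply Prod.ext
  · rfl
  · apply Equiv.ext
    intro x
    show (Equiv.swap _ _) ((Equiv.swap _ _) (s.2 x)) = s.2 x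
    exact Equiv.swap_apply_self _ _ _

lemma mid_ne {k N : ℕ} (s : SimpT (k+1) N) (j : Fin (k+2)) (hj0 : (j:ℕ) ≠ 0)
    (hjl : (j:ℕ) ≠ k+1) : midS s j ≠ s := by
  intro hc
  have hperm := congrArg Prod.snd hc
  have hjv := j.isLt
  have h2 := congrArg (fun (e : Equiv.Perm (Fin (k+1))) => (e (s.2.symm ⟨(j:ℕ)-1, by omega⟩) : ℕ))
    hperm
  simp only [midS, Equiv.trans_apply, Equiv.apply_symm_apply, Equiv.swap_apply_left] at h2
  try dsimp only at h2
  omega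

end CubeSperner

namespace CubeSperner

open Finset

/-- doors and rainbows -/
def doorF {m N : ℕ} (L : (Fin m → ℕ) → Fin (m+1)) (s : SimpT m N) (j : Fin (m+1)) :
    Finset (Fin (m+1)) :=
  (Finset.univ.erase j).image (fun i => L (vert s i))

def IsDoor {m N : ℕ} (L : (Fin m → ℕ) → Fin (m+1)) (s : SimpT m N) (j : Fin (m+1)) : Prop :=
  doorF L s j = Finset.univ.erase (Fin.last m)

open Classical in
noncomputable def rbInd {m N : ℕ} (L : (Fin m → ℕ) → Fin (m+1)) (s : SimpT m N) : ZMod 2 :=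
  if Function.Surjective (fun j => L (vert s j)) then 1 else 0

noncomputable def count (m N : ℕ) (L : (Fin m → ℕ) → Fin (m+1)) : ZMod 2 :=
  ∑ s : SimpT m N, rbInd L s

lemma erase_zero_image (n : ℕ) :
    (Finset.univ.erase (0 : Fin (n+1))) = Finset.univ.image Fin.succ := by
  ext i
  simp only [Finset.mem_erase, Finset.mem_univ, and_true, Finset.mem_image, true_and]
  constructor
  · intro h
    exact ⟨i.pred h, Fin.succ_pred i h⟩
  · rintro ⟨a, rfl⟩
    exact Fin.succ_ne_zero a

lemma erase_last_image (n : ℕ) :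
    (Finset.univ.erase (Fin.last n)) = Finset.univ.image Fin.castSucc := by
  ext i
  simp only [Finset.mem_erase, Finset.mem_univ, and_true, Finset.mem_image, true_and]
  constructor
  · intro h
    have h1 := i.isLt
    have h2 : (i:ℕ) ≠ n := fun hc => h (Fin.ext (by simp [hc]))
    exact ⟨⟨(i:ℕ), by omega⟩, Fin.ext rfl⟩
  · rintro ⟨a, rfl⟩
    have := a.isLt
    intro hc
    have := congrArg Fin.val hc
    simp at this
    omega

section Transfer

variable {k N : ℕ} (L : (Fin (k+1) → ℕ) → Fin (k+2))

lemma doorF_rot (s : SimpT (k+1) N) (h : (s.1 (s.2.symm 0) : ℕ) + 1 < N) :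
    doorF L (rotS s) (Fin.last (k+1)) = doorF L s 0 := by
  unfold doorF
  rw [erase_last_image (k+1), erase_zero_image (k+1), Finset.image_image, Finset.image_image]
  apply Finset.image_congr
  intro i _
  simp only [Function.comp_apply]
  rw [rot_vert s h i]

lemma doorF_unrot (s : SimpT (k+1) N) (h : 1 ≤ (s.1 (s.2.symm (Fin.last k)) : ℕ)) :
    doorF L (unrotS s) 0 = doorF L s (Fin.last (k+1)) := by
  unfold doorF
  rw [erase_last_image (k+1), erase_zero_image (k+1), Finset.image_image, Finset.image_image]
  apply Finset.image_congr
  intro i _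
  simp only [Function.comp_apply]
  rw [unrot_vert s h i]

lemma doorF_mid (s : SimpT (k+1) N) (j : Fin (k+2)) (hj0 : (j:ℕ) ≠ 0) (hjl : (j:ℕ) ≠ k+1) :
    doorF L (midS s j) j = doorF L s j := by
  unfold doorF
  apply Finset.image_congr
  intro i hi
  have hne : (i:ℕ) ≠ (j:ℕ) := by
    intro hc
    exact (Finset.mem_erase.1 (Finset.mem_coe.1 hi)).1 (Fin.ext hc)
  dsimp only
  rw [mid_vert s j hj0 hjl i hne]

end Transfer

section Restriction

variable {k N : ℕ}

def extend0 {k : ℕ} (y : Fin k → ℕ) : Fin (k+1) → ℕ :=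
  fun d => if h : (d:ℕ) < k then y ⟨(d:ℕ), h⟩ else 0

noncomputable def resL {k : ℕ} (L : (Fin (k+1) → ℕ) → Fin (k+2)) : (Fin k → ℕ) → Fin (k+1) :=
  fun y => if h : (L (extend0 y) : ℕ) < k + 1 then ⟨(L (extend0 y) : ℕ), h⟩ else 0

def extPerm {k : ℕ} (τ : Equiv.Perm (Fin k)) : Equiv.Perm (Fin (k+1)) where
  toFun d := if h : (d:ℕ) < k then (τ ⟨(d:ℕ), h⟩).castSucc else Fin.last k
  invFun d := if h : (d:ℕ) < k then (τ.symm ⟨(d:ℕ), h⟩).castSucc else Fin.last k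
  left_inv d := by
    dsimp only
    by_cases h : (d:ℕ) < k
    · rw [dif_pos h]
      have h2 : (((τ ⟨(d:ℕ), h⟩).castSucc : Fin (k+1)) : ℕ) < k := by
        simp only [Fin.coe_castSucc]
        exact (τ ⟨(d:ℕ), h⟩).isLt
      rw [dif_pos h2]
      have h3 : (⟨(((τ ⟨(d:ℕ), h⟩).castSucc : Fin (k+1)) : ℕ), h2⟩ : Fin k) = τ ⟨(d:ℕ), h⟩ :=
        Fin.ext (by simp)
      rw [h3, Equiv.symm_apply_apply]
      exact Fin.ext rfl
    · rw [dif_neg h, dif_neg (by simp)]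
      have := d.isLt
      exact Fin.ext (by simp; omega)
  right_inv d := by
    dsimp only
    by_cases h : (d:ℕ) < k
    · rw [dif_pos h]
      have h2 : (((τ.symm ⟨(d:ℕ), h⟩).castSucc : Fin (k+1)) : ℕ) < k := by
        simp only [Fin.coe_castSucc]
        exact (τ.symm ⟨(d:ℕ), h⟩).isLt
      rw [dif_pos h2]
      have h3 : (⟨(((τ.symm ⟨(d:ℕ), h⟩).castSucc : Fin (k+1)) : ℕ), h2⟩ : Fin k) = τ.symm ⟨(d:ℕ), h⟩ :=
        Fin.ext (by simp)
      rw [h3, Equiv.apply_symm_apply]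
      exact Fin.ext rfl
    · rw [dif_neg h, dif_neg (by simp)]
      have := d.isLt
      exact Fin.ext (by simp; omega)

lemma extPerm_last {k : ℕ} (τ : Equiv.Perm (Fin k)) : extPerm τ (Fin.last k) = Fin.last k := by
  simp only [extPerm, Equiv.coe_fn_mk]
  rw [dif_neg (by simp)]

lemma extPerm_castSucc {k : ℕ} (τ : Equiv.Perm (Fin k)) (i : Fin k) :
    extPerm τ i.castSucc = (τ i).castSucc := by
  simp only [extPerm, Equiv.coe_fn_mk]
  rw [dif_pos (by simp [i.isLt])]
  congr 1

lemma extPerm_symm_last {k : ℕ} (τ : Equiv.Perm (Fin k)) :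
    (extPerm τ).symm (Fin.last k) = Fin.last k := by
  rw [Equiv.symm_apply_eq]
  exact (extPerm_last τ).symm

def resPerm {k : ℕ} (τ : Equiv.Perm (Fin (k+1))) (hτ : τ (Fin.last k) = Fin.last k) :
    Equiv.Perm (Fin k) where
  toFun i := ⟨(τ i.castSucc : ℕ), by
    have h2 := (τ i.castSucc).isLt
    have h3 : τ i.castSucc ≠ Fin.last k := by
      intro hc
      have := τ.injective (hc.trans hτ.symm)
      have := congrArg Fin.val this
      simp at this
      omega
    have h4 : (τ i.castSucc : ℕ) ≠ k := fun hc => h3 (Fin.ext (by simp [hc]))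
    omega⟩
  invFun i := ⟨(τ.symm i.castSucc : ℕ), by
    have hτs : τ.symm (Fin.last k) = Fin.last k := by
      rw [Equiv.symm_apply_eq]
      exact hτ.symm
    have h2 := (τ.symm i.castSucc).isLt
    have h3 : τ.symm i.castSucc ≠ Fin.last k := by
      intro hc
      have := τ.symm.injective (hc.trans hτs.symm)
      have := congrArg Fin.val this
      simp at this
      omega
    have h4 : (τ.symm i.castSucc : ℕ) ≠ k := fun hc => h3 (Fin.ext (by simp [hc]))
    omega⟩
  left_inv i := by
    apply Fin.ext
    dsimp only
    rw [Fin.castSucc_mk, Fin.eta, Equiv.symm_apply_apply]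
    simp
  right_inv i := by
    apply Fin.ext
    dsimp only
    rw [Fin.castSucc_mk, Fin.eta, Equiv.apply_symm_apply]
    simp

lemma resPerm_val {k : ℕ} (τ : Equiv.Perm (Fin (k+1))) (hτ : τ (Fin.last k) = Fin.last k)
    (i : Fin k) : ((resPerm τ hτ) i : ℕ) = (τ i.castSucc : ℕ) := rfl

lemma resPerm_extPerm {k : ℕ} (τ : Equiv.Perm (Fin k)) (h : extPerm τ (Fin.last k) = Fin.last k) :
    resPerm (extPerm τ) h = τ := by
  apply Equiv.ext
  intro i
  apply Fin.ext
  rw [resPerm_val, extPerm_castSucc]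
  rfl

lemma extPerm_resPerm {k : ℕ} (τ : Equiv.Perm (Fin (k+1))) (hτ : τ (Fin.last k) = Fin.last k) :
    extPerm (resPerm τ hτ) = τ := by
  apply Equiv.ext
  intro d
  by_cases h : (d:ℕ) < k
  · have hd : d = (⟨(d:ℕ), h⟩ : Fin k).castSucc := Fin.ext rfl
    rw [hd, extPerm_castSucc]
    apply Fin.ext
    rw [Fin.coe_castSucc, resPerm_val]
  · have hd : d = Fin.last k := Fin.ext (by have := d.isLt; simp; omega)
    rw [hd, extPerm_last, hτ]

/-- Restriction of a simplex lying in the bottom face (dite-total in the permutation part). -/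
noncomputable def resS {k N : ℕ} (s : SimpT (k+1) N) : SimpT k N :=
  (fun i => s.1 i.castSucc,
   if hτ : s.2 (Fin.last k) = Fin.last k then resPerm s.2 hτ else Equiv.refl _)

/-- Extension of a simplex to the bottom face of the next dimension. -/
def extS {k N : ℕ} (hN : 0 < N) (s : SimpT k N) : SimpT (k+1) N :=
  (fun d => if h : (d:ℕ) < k then s.1 ⟨(d:ℕ), h⟩ else ⟨0, hN⟩, extPerm s.2)

lemma resS_extS {k N : ℕ} (hN : 0 < N) (s : SimpT k N) : resS (extS hN s) = s := by
  apply Prod.ext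
  · funext i
    show (if h : ((i.castSucc : Fin (k+1)):ℕ) < k then s.1 ⟨_, h⟩ else _) = s.1 i
    rw [dif_pos (by simp [i.isLt])]
    congr 1
  · show (if hτ : (extS hN s).2 (Fin.last k) = Fin.last k then _ else _) = s.2
    rw [dif_pos (show (extS hN s).2 (Fin.last k) = Fin.last k from extPerm_last s.2)]
    exact resPerm_extPerm s.2 _

lemma extS_resS {k N : ℕ} (hN : 0 < N) (s : SimpT (k+1) N)
    (hτ : s.2 (Fin.last k) = Fin.last k) (hx : (s.1 (Fin.last k) : ℕ) = 0) :
    extS hN (resS s) = s := by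
  apply Prod.ext
  · funext d
    apply Fin.ext
    show ((if h : (d:ℕ) < k then (fun i : Fin k => s.1 i.castSucc) ⟨(d:ℕ), h⟩
      else (⟨0, hN⟩ : Fin N)) : Fin N).val = _
    by_cases h : (d:ℕ) < k
    · rw [dif_pos h]
      rfl
    · rw [dif_neg h]
      have hd : d = Fin.last k := Fin.ext (by have := d.isLt; simp; omega)
      rw [hd]
      exact hx.symm
  · show extPerm (resS s).2 = s.2
    have : (resS s).2 = resPerm s.2 hτ := by
      show (if hτ' : s.2 (Fin.last k) = Fin.last k then _ else _) = _
      rw [dif_pos hτ]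
    rw [this]
    exact extPerm_resPerm s.2 hτ

lemma vert_castSucc_last {k N : ℕ} (s : SimpT (k+1) N)
    (hτ : s.2 (Fin.last k) = Fin.last k) (hx : (s.1 (Fin.last k) : ℕ) = 0) (j : Fin (k+1)) :
    vert s j.castSucc (Fin.last k) = 0 := by
  unfold vert
  have hτv : (s.2 (Fin.last k) : ℕ) = k := by rw [hτ]; simp
  rw [hτv, hx]
  have := j.isLt
  rw [if_neg (by simp only [Fin.coe_castSucc]; omega)]

lemma resS_vert {k N : ℕ} (s : SimpT (k+1) N)
    (hτ : s.2 (Fin.last k) = Fin.last k) (hx : (s.1 (Fin.last k) : ℕ) = 0) (j : Fin (k+1)) :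
    extend0 (vert (resS s) j) = vert s j.castSucc := by
  funext d
  unfold extend0
  by_cases h : (d:ℕ) < k
  · rw [dif_pos h]
    show vert (resS s) j ⟨(d:ℕ), h⟩ = _
    unfold vert
    have hbase : ((resS s).1 ⟨(d:ℕ), h⟩ : ℕ) = (s.1 d : ℕ) := rfl
    have hperm : ((resS s).2 ⟨(d:ℕ), h⟩ : ℕ) = (s.2 d : ℕ) := by
      show ((if hτ' : s.2 (Fin.last k) = Fin.last k then resPerm s.2 hτ'
        else Equiv.refl _) ⟨(d:ℕ), h⟩ : ℕ) = _
      rw [dif_pos hτ, resPerm_val]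
      rfl
    rw [hbase, hperm]
    simp only [Fin.coe_castSucc]
  · rw [dif_neg h]
    have hd : d = Fin.last k := Fin.ext (by have := d.isLt; simp; omega)
    rw [hd, vert_castSucc_last s hτ hx j]

end Restriction

end CubeSperner

namespace CubeSperner
open Finset

section DoorRes

variable {k N : ℕ} (L : (Fin (k+1) → ℕ) → Fin (k+2))

lemma resL_val (y : Fin k → ℕ) (h : (L (extend0 y) : ℕ) < k + 1) :
    (resL L y : ℕ) = (L (extend0 y) : ℕ) := by
  unfold resL
  rw [dif_pos h]

lemma door_iff_res (s : SimpT (k+1) N)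
    (hτ : s.2 (Fin.last k) = Fin.last k) (hx : (s.1 (Fin.last k) : ℕ) = 0)
    (hglast : ∀ j : Fin (k+1), L (vert s j.castSucc) ≠ Fin.last (k+1)) :
    IsDoor L s (Fin.last (k+1)) ↔
      Function.Surjective (fun j => resL L (vert (resS s) j)) := by
  have hval : ∀ j : Fin (k+1), (L (vert s j.castSucc) : ℕ) < k + 1 := by
    intro j
    have h2 := (L (vert s j.castSucc)).isLt
    have h3 : (L (vert s j.castSucc) : ℕ) ≠ k + 1 :=
      fun hc => hglast j (Fin.ext (by simp [hc]))
    omega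
  have hres : ∀ j : Fin (k+1), (resL L (vert (resS s) j) : ℕ) = (L (vert s j.castSucc) : ℕ) := by
    intro j
    have h := resL_val L (vert (resS s) j) (by rw [resS_vert s hτ hx j]; exact hval j)
    rw [h, resS_vert s hτ hx j]
  unfold IsDoor doorF
  conv_lhs => lhs; rw [erase_last_image (k+1), Finset.image_image]
  constructor
  · intro himg b
    have hbmem : (b.castSucc : Fin (k+2)) ∈ Finset.univ.erase (Fin.last (k+1)) := by
      refine Finset.mem_erase.2 ⟨?_, Finset.mem_univ _⟩
      intro hc
      have := congrArg Fin.val hc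
      simp at this
      omega
    rw [← himg] at hbmem
    obtain ⟨j, _, hj⟩ := Finset.mem_image.1 hbmem
    refine ⟨j, Fin.ext ?_⟩
    have : (L (vert s j.castSucc) : ℕ) = (b:ℕ) := by
      have := congrArg Fin.val hj
      simpa [Function.comp] using this
    rw [hres j, this]
  · intro hsurj
    apply Finset.Subset.antisymm
    · intro a ha
      obtain ⟨j, _, hj⟩ := Finset.mem_image.1 ha
      refine Finset.mem_erase.2 ⟨?_, Finset.mem_univ _⟩
      rw [← hj]
      exact hglast j
    · intro a ha
      have hane := (Finset.mem_erase.1 ha).1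
      have haval : (a : ℕ) < k + 1 := by
        have h2 := a.isLt
        have : (a:ℕ) ≠ k + 1 := fun hc => hane (Fin.ext (by simp [hc]))
        omega
      obtain ⟨j, hj⟩ := hsurj ⟨(a:ℕ), haval⟩
      refine Finset.mem_image.2 ⟨j, Finset.mem_univ _, ?_⟩
      show L (vert s j.castSucc) = a
      apply Fin.ext
      have := congrArg Fin.val hj
      rw [hres j] at this
      simpa using this

lemma extend0_le (y : Fin k → ℕ) (hy : ∀ d, y d ≤ N) : ∀ d, extend0 y d ≤ N := by
  intro d
  unfold extend0
  split_ifs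
  · exact hy _
  · exact Nat.zero_le _

lemma extend0_last (y : Fin k → ℕ) : extend0 y (Fin.last k) = 0 := by
  unfold extend0
  rw [dif_neg (by simp)]

lemma resL_ne_top (y : Fin k → ℕ) (hy : ∀ d, y d ≤ N)
    (h1 : ∀ x : Fin (k+1) → ℕ, (∀ d, x d ≤ N) → ∀ d : Fin (k+1), x d = 0 →
      L x ≠ Fin.succ d) :
    (L (extend0 y) : ℕ) < k + 1 := by
  have h2 := (L (extend0 y)).isLt
  have h3 : L (extend0 y) ≠ Fin.succ (Fin.last k) :=
    h1 _ (extend0_le y hy) (Fin.last k) (extend0_last y)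
  have h4 : (L (extend0 y) : ℕ) ≠ k + 1 := by
    intro hc
    exact h3 (Fin.ext (by simp [hc]))
  omega

lemma resL_h1 (h1 : ∀ x : Fin (k+1) → ℕ, (∀ d, x d ≤ N) → ∀ d : Fin (k+1), x d = 0 →
      L x ≠ Fin.succ d) :
    ∀ y : Fin k → ℕ, (∀ d, y d ≤ N) → ∀ d : Fin k, y d = 0 → resL L y ≠ Fin.succ d := by
  intro y hy d hyd hc
  have hval := resL_val L y (resL_ne_top L y hy h1)
  have hext : extend0 y d.castSucc = 0 := by
    unfold extend0
    rw [dif_pos (by simp [d.isLt])]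
    rw [← hyd]
    congr 1
  have := h1 (extend0 y) (extend0_le y hy) d.castSucc hext
  apply this
  apply Fin.ext
  have hc' := congrArg Fin.val hc
  rw [hval] at hc'
  simpa using hc'

lemma resL_h0 (h1 : ∀ x : Fin (k+1) → ℕ, (∀ d, x d ≤ N) → ∀ d : Fin (k+1), x d = 0 →
      L x ≠ Fin.succ d)
    (h0 : ∀ x : Fin (k+1) → ℕ, (∀ d, x d ≤ N) → (∃ d, x d = N) → L x ≠ 0) :
    ∀ y : Fin k → ℕ, (∀ d, y d ≤ N) → (∃ d, y d = N) → resL L y ≠ 0 := by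
  intro y hy ⟨d, hd⟩ hc
  have hval := resL_val L y (resL_ne_top L y hy h1)
  have hext : extend0 y d.castSucc = N := by
    unfold extend0
    rw [dif_pos (by simp [d.isLt])]
    rw [← hd]
    congr 1
  have := h0 (extend0 y) (extend0_le y hy) ⟨d.castSucc, hext⟩
  apply this
  apply Fin.ext
  have hc' := congrArg Fin.val hc
  rw [hval] at hc'
  simpa using hc'

end DoorRes

end CubeSperner

namespace CubeSperner
open Finset

section Involution

variable {k N : ℕ} (L : (Fin (k+1) → ℕ) → Fin (k+2))

lemma doorF_zero_lt (h0 : ∀ x : Fin (k+1) → ℕ, (∀ d, x d ≤ N) → (∃ d, x d = N) → L x ≠ 0)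
    (s : SimpT (k+1) N) (hs : IsDoor L s 0) : (s.1 (s.2.symm 0) : ℕ) + 1 < N := by
  by_contra hc
  push_neg at hc
  have hxlt := (s.1 (s.2.symm 0)).isLt
  have h0mem : (0 : Fin (k+2)) ∈ Finset.univ.erase (Fin.last (k+1)) := by
    refine Finset.mem_erase.2 ⟨?_, Finset.mem_univ _⟩
    intro hcc
    have := congrArg Fin.val hcc
    simp at this
  rw [← hs] at h0mem
  obtain ⟨i, hi, hL⟩ := Finset.mem_image.1 h0mem
  have hine : (i:ℕ) ≠ 0 := by
    intro hcc
    exact (Finset.mem_erase.1 hi).1 (Fin.ext hcc)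
  have hv : vert s i (s.2.symm 0) = N := by
    unfold vert
    have h2 : (s.2 (s.2.symm 0) : ℕ) = 0 := by rw [Equiv.apply_symm_apply]; rfl
    rw [h2, if_pos (by omega)]
    omega
  exact h0 (vert s i) (vert_le s i) ⟨_, hv⟩ hL

lemma doorF_last_fix (h1 : ∀ x : Fin (k+1) → ℕ, (∀ d, x d ≤ N) → ∀ d : Fin (k+1), x d = 0 →
      L x ≠ Fin.succ d)
    (s : SimpT (k+1) N) (hs : IsDoor L s (Fin.last (k+1)))
    (hx : (s.1 (s.2.symm (Fin.last k)) : ℕ) = 0) :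
    s.2.symm (Fin.last k) = Fin.last k := by
  by_contra hne
  have hd₁lt := (s.2.symm (Fin.last k)).isLt
  have hd₁v : ((s.2.symm (Fin.last k)) : ℕ) ≠ k := fun hc => hne (Fin.ext (by simp [hc]))
  have hcmem : (Fin.succ (s.2.symm (Fin.last k)) : Fin (k+2)) ∈
      Finset.univ.erase (Fin.last (k+1)) := by
    refine Finset.mem_erase.2 ⟨?_, Finset.mem_univ _⟩
    intro hcc
    have := congrArg Fin.val hcc
    simp at this
    omega
  rw [← hs] at hcmem
  obtain ⟨i, hi, hL⟩ := Finset.mem_image.1 hcmem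
  have hiv : (i:ℕ) ≠ k+1 := fun hc => (Finset.mem_erase.1 hi).1 (Fin.ext (by simp [hc]))
  have hv : vert s i (s.2.symm (Fin.last k)) = 0 := by
    unfold vert
    have hτ : (s.2 (s.2.symm (Fin.last k)) : ℕ) = k := by rw [Equiv.apply_symm_apply]; simp
    have := i.isLt
    rw [hτ, hx, if_neg (by omega)]
  exact h1 (vert s i) (vert_le s i) _ hv hL

open Classical in
lemma middle_sum_zero
    (h0 : ∀ x : Fin (k+1) → ℕ, (∀ d, x d ≤ N) → (∃ d, x d = N) → L x ≠ 0) :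
    ∑ p ∈ (Finset.univ.filter
        (fun p : SimpT (k+1) N × Fin (k+2) => IsDoor L p.1 p.2)).filter
      (fun p => ¬ (p.2 = Fin.last (k+1) ∧ (p.1.1 (p.1.2.symm (Fin.last k)) : ℕ) = 0)),
      (1 : ZMod 2) = 0 := by
  classical
  set Q := (Finset.univ.filter
        (fun p : SimpT (k+1) N × Fin (k+2) => IsDoor L p.1 p.2)).filter
      (fun p => ¬ (p.2 = Fin.last (k+1) ∧ (p.1.1 (p.1.2.symm (Fin.last k)) : ℕ) = 0)) with hQ
  have hmem : ∀ p : SimpT (k+1) N × Fin (k+2), p ∈ Q ↔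
      (IsDoor L p.1 p.2 ∧ ¬ (p.2 = Fin.last (k+1) ∧ (p.1.1 (p.1.2.symm (Fin.last k)) : ℕ) = 0)) := by
    intro p
    rw [hQ, Finset.mem_filter, Finset.mem_filter]
    simp only [Finset.mem_univ, true_and]
  set g : SimpT (k+1) N × Fin (k+2) → SimpT (k+1) N × Fin (k+2) := fun p =>
    if (p.2 : ℕ) = 0 then (rotS p.1, Fin.last (k+1))
    else if (p.2 : ℕ) = k+1 then (unrotS p.1, (0 : Fin (k+2)))
    else (midS p.1 p.2, p.2) with hgdef
  -- basic facts in the three cases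
  have case0 : ∀ p (hp : p ∈ Q), (p.2 : ℕ) = 0 →
      g p = (rotS p.1, Fin.last (k+1)) ∧ IsDoor L p.1 0 ∧
        (p.1.1 (p.1.2.symm 0) : ℕ) + 1 < N := by
    intro p hp h
    have hd : IsDoor L p.1 0 := by
      have := ((hmem p).1 hp).1
      rwa [show p.2 = (0 : Fin (k+2)) from Fin.ext h] at this
    exact ⟨by rw [hgdef]; simp only [if_pos h], hd, doorF_zero_lt L h0 p.1 hd⟩
  have casel : ∀ p (hp : p ∈ Q), (p.2 : ℕ) = k+1 →
      g p = (unrotS p.1, (0 : Fin (k+2))) ∧ IsDoor L p.1 (Fin.last (k+1)) ∧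
        1 ≤ (p.1.1 (p.1.2.symm (Fin.last k)) : ℕ) := by
    intro p hp h
    have hp2 : p.2 = Fin.last (k+1) := Fin.ext (by simp [h])
    have hd : IsDoor L p.1 (Fin.last (k+1)) := by
      have := ((hmem p).1 hp).1
      rwa [hp2] at this
    have hx : (p.1.1 (p.1.2.symm (Fin.last k)) : ℕ) ≠ 0 := by
      intro hc
      exact ((hmem p).1 hp).2 ⟨hp2, hc⟩
    refine ⟨?_, hd, by omega⟩
    rw [hgdef]
    simp only [if_neg (by omega : ¬ (p.2:ℕ) = 0), if_pos h]
  have casem : ∀ p (hp : p ∈ Q), (p.2 : ℕ) ≠ 0 → (p.2 : ℕ) ≠ k+1 →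
      g p = (midS p.1 p.2, p.2) ∧ IsDoor L p.1 p.2 := by
    intro p hp h h'
    exact ⟨by rw [hgdef]; simp only [if_neg h, if_neg h'], ((hmem p).1 hp).1⟩
  have gmem : ∀ p (hp : p ∈ Q), g p ∈ Q := by
    intro p hp
    by_cases h : (p.2:ℕ) = 0
    · obtain ⟨hg, hd, hlt⟩ := case0 p hp h
      rw [hg, hmem]
      constructor
      · show IsDoor L (rotS p.1) (Fin.last (k+1))
        unfold IsDoor
        rw [doorF_rot L p.1 hlt]
        exact hd
      · rintro ⟨-, hx0⟩
        rw [show (rotS p.1).2.symm (Fin.last k) = p.1.2.symm 0 from rotS_symm_last p.1] at hx0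
        rw [rotS_base_val p.1 (p.1.2.symm 0), if_pos rfl] at hx0
        omega
    · by_cases h' : (p.2:ℕ) = k+1
      · obtain ⟨hg, hd, hge⟩ := casel p hp h'
        rw [hg, hmem]
        constructor
        · show IsDoor L (unrotS p.1) 0
          unfold IsDoor
          rw [doorF_unrot L p.1 hge]
          exact hd
        · rintro ⟨hc, -⟩
          have := congrArg Fin.val hc
          simp at this
      · obtain ⟨hg, hd⟩ := casem p hp h h'
        rw [hg, hmem]
        constructor
        · show IsDoor L (midS p.1 p.2) p.2
          unfold IsDoor
          rw [doorF_mid L p.1 p.2 h h']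
          exact hd
        · rintro ⟨hc, -⟩
          exact h' (by rw [hc]; simp)
  refine Finset.sum_involution (fun p _ => g p) (fun p hp => by decide) ?_
    (fun p hp => gmem p hp) ?_
  · -- g p ≠ p
    intro p hp _
    show g p ≠ p
    by_cases h : (p.2:ℕ) = 0
    · obtain ⟨hg, -, -⟩ := case0 p hp h
      rw [hg]
      intro hc
      have := congrArg (fun q : SimpT (k+1) N × Fin (k+2) => (q.2 : ℕ)) hc
      simp at this
      omega
    · by_cases h' : (p.2:ℕ) = k+1
      · obtain ⟨hg, -, -⟩ := casel p hp h'
        rw [hg]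
        intro hc
        have := congrArg (fun q : SimpT (k+1) N × Fin (k+2) => (q.2 : ℕ)) hc
        simp at this
        omega
      · obtain ⟨hg, -⟩ := casem p hp h h'
        rw [hg]
        intro hc
        exact mid_ne p.1 p.2 h h' (congrArg Prod.fst hc)
  · -- g (g p) = p
    intro p hp
    show g (g p) = p
    by_cases h : (p.2:ℕ) = 0
    · obtain ⟨hg, hd, hlt⟩ := case0 p hp h
      have hmem2 := gmem p hp
      rw [hg] at hmem2 ⊢
      obtain ⟨hg2, -, -⟩ := casel _ hmem2 (by simp)
      rw [hg2]
      have : unrotS (rotS p.1) = p.1 := unrot_rot p.1 hlt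
      rw [this]
      exact Prod.ext rfl (Fin.ext (by simp [h])).symm
    · by_cases h' : (p.2:ℕ) = k+1
      · obtain ⟨hg, hd, hge⟩ := casel p hp h'
        have hmem2 := gmem p hp
        rw [hg] at hmem2 ⊢
        obtain ⟨hg2, -, -⟩ := case0 _ hmem2 (by simp)
        rw [hg2]
        have : rotS (unrotS p.1) = p.1 := rot_unrot p.1 hge
        rw [this]
        exact Prod.ext rfl (Fin.ext (by simp [h'])).symm
      · obtain ⟨hg, -⟩ := casem p hp h h'
        have hmem2 := gmem p hp
        rw [hg] at hmem2 ⊢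
        obtain ⟨hg2, -⟩ := casem _ hmem2 h h'
        rw [hg2]
        exact Prod.ext (mid_mid p.1 p.2) rfl

end Involution

end CubeSperner

namespace CubeSperner
open Finset

section Boundary

variable {k N : ℕ} (L : (Fin (k+1) → ℕ) → Fin (k+2))

lemma extS_base_last (hN : 0 < N) (s : SimpT k N) :
    ((extS hN s).1 (Fin.last k) : ℕ) = 0 := by
  show ((if h : ((Fin.last k : Fin (k+1)):ℕ) < k then _ else (⟨0, hN⟩ : Fin N)) : Fin N).val = 0
  rw [dif_neg (by simp)]

lemma hglast_of_h1
    (h1 : ∀ x : Fin (k+1) → ℕ, (∀ d, x d ≤ N) → ∀ d : Fin (k+1), x d = 0 → L x ≠ Fin.succ d)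
    (s : SimpT (k+1) N) (hτ : s.2 (Fin.last k) = Fin.last k)
    (hx : (s.1 (Fin.last k) : ℕ) = 0) (j : Fin (k+1)) :
    L (vert s j.castSucc) ≠ Fin.last (k+1) := by
  have h := h1 (vert s j.castSucc) (vert_le s _) (Fin.last k) (vert_castSucc_last s hτ hx j)
  rwa [Fin.succ_last] at h

open Classical in
lemma boundary_sum (hN : 0 < N)
    (h1 : ∀ x : Fin (k+1) → ℕ, (∀ d, x d ≤ N) → ∀ d : Fin (k+1), x d = 0 → L x ≠ Fin.succ d) :
    ∑ p ∈ (Finset.univ.filter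
        (fun p : SimpT (k+1) N × Fin (k+2) => IsDoor L p.1 p.2)).filter
      (fun p => (p.2 = Fin.last (k+1) ∧ (p.1.1 (p.1.2.symm (Fin.last k)) : ℕ) = 0)),
      (1 : ZMod 2) = count k N (resL L) := by
  classical
  have hcount : count k N (resL L) =
      ∑ s' ∈ Finset.univ.filter
        (fun s' : SimpT k N => Function.Surjective (fun j => resL L (vert s' j))),
        (1 : ZMod 2) := by
    rw [count, Finset.sum_filter]
    rfl
  rw [hcount]
  -- facts about members of the boundary set
  have hfacts : ∀ p : SimpT (k+1) N × Fin (k+2),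
      p ∈ (Finset.univ.filter
        (fun p : SimpT (k+1) N × Fin (k+2) => IsDoor L p.1 p.2)).filter
      (fun p => (p.2 = Fin.last (k+1) ∧ (p.1.1 (p.1.2.symm (Fin.last k)) : ℕ) = 0)) →
      IsDoor L p.1 (Fin.last (k+1)) ∧ p.2 = Fin.last (k+1) ∧
        p.1.2 (Fin.last k) = Fin.last k ∧ (p.1.1 (Fin.last k) : ℕ) = 0 := by
    intro p hp
    rw [Finset.mem_filter, Finset.mem_filter] at hp
    obtain ⟨⟨-, hdoor⟩, hp2, hx0⟩ := hp
    rw [hp2] at hdoor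
    have hfix : p.1.2.symm (Fin.last k) = Fin.last k := doorF_last_fix L h1 p.1 hdoor hx0
    have hτ : p.1.2 (Fin.last k) = Fin.last k := ((Equiv.symm_apply_eq p.1.2).1 hfix).symm
    have hx : (p.1.1 (Fin.last k) : ℕ) = 0 := by rwa [hfix] at hx0
    exact ⟨hdoor, hp2, hτ, hx⟩
  refine Finset.sum_bij' (fun p _ => resS p.1)
    (fun s' _ => ((extS hN s', Fin.last (k+1)) : SimpT (k+1) N × Fin (k+2))) ?_ ?_ ?_ ?_ ?_
  · -- maps into rainbow set
    intro p hp
    obtain ⟨hdoor, hp2, hτ, hx⟩ := hfacts p hp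
    rw [Finset.mem_filter]
    refine ⟨Finset.mem_univ _, ?_⟩
    exact (door_iff_res L p.1 hτ hx (hglast_of_h1 L h1 p.1 hτ hx)).1 hdoor
  · -- reverse map lands in boundary set
    intro s' hs'
    rw [Finset.mem_filter] at hs'
    have hτe : (extS hN s').2 (Fin.last k) = Fin.last k := extPerm_last s'.2
    have hxe : ((extS hN s').1 (Fin.last k) : ℕ) = 0 := extS_base_last hN s'
    have hsurj : Function.Surjective (fun j => resL L (vert (resS (extS hN s')) j)) := by
      rw [resS_extS hN s']
      exact hs'.2
    have hdoor : IsDoor L (extS hN s') (Fin.last (k+1)) :=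
      (door_iff_res L (extS hN s') hτe hxe (hglast_of_h1 L h1 _ hτe hxe)).2 hsurj
    rw [Finset.mem_filter, Finset.mem_filter]
    refine ⟨⟨Finset.mem_univ _, ?_⟩, rfl, ?_⟩
    · show IsDoor L (extS hN s') (Fin.last (k+1))
      exact hdoor
    · show ((extS hN s').1 ((extS hN s').2.symm (Fin.last k)) : ℕ) = 0
      rw [show (extS hN s').2.symm (Fin.last k) = Fin.last k from extPerm_symm_last s'.2]
      exact hxe
  · -- left inverse
    intro p hp
    obtain ⟨hdoor, hp2, hτ, hx⟩ := hfacts p hp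
    apply Prod.ext
    · exact extS_resS hN p.1 hτ hx
    · exact hp2.symm
  · -- right inverse
    intro s' _
    exact resS_extS hN s'
  · intro p hp
    rfl

end Boundary

open Classical in
theorem count_eq_one : ∀ (m : ℕ) {N : ℕ}, 0 < N →
    ∀ (L : (Fin m → ℕ) → Fin (m+1)),
    (∀ x : Fin m → ℕ, (∀ d, x d ≤ N) → ∀ d : Fin m, x d = 0 → L x ≠ Fin.succ d) →
    (∀ x : Fin m → ℕ, (∀ d, x d ≤ N) → (∃ d, x d = N) → L x ≠ 0) →
    count m N L = 1 := by
  intro m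
  induction m with
  | zero =>
    intro N hN L h1 h0
    have hu : ∀ s : SimpT 0 N, rbInd L s = 1 := by
      intro s
      unfold rbInd
      rw [if_pos]
      intro b
      refine ⟨0, Fin.ext ?_⟩
      have hb1 := (L (vert s 0)).isLt
      have hb2 := b.isLt
      omega
    rw [count, Finset.sum_congr rfl (fun s _ => hu s), Finset.sum_const, Finset.card_univ]
    have hcard : Fintype.card (SimpT 0 N) = 1 := by
      rw [Fintype.card_prod]
      simp
    rw [hcard, one_smul]
  | succ k IH =>
    intro N hN L h1 h0
    classical
    have step1 : count (k+1) N L =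
        ∑ p : SimpT (k+1) N × Fin (k+2), (if IsDoor L p.1 p.2 then (1:ZMod 2) else 0) := by
      rw [count, Fintype.sum_prod_type
        (f := fun p : SimpT (k+1) N × Fin (k+2) => if IsDoor L p.1 p.2 then (1:ZMod 2) else 0)]
      refine Finset.sum_congr rfl fun s _ => ?_
      calc rbInd L s
          = if Function.Surjective (fun j => L (vert s j)) then (1:ZMod 2) else 0 := rfl
        _ = ∑ j : Fin (k+2), if (Finset.univ.erase j).image (fun i => L (vert s i)) =
              Finset.univ.erase (Fin.last (k+1)) then (1:ZMod 2) else 0 :=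
            (doorsum (fun j => L (vert s j))).symm
        _ = ∑ j : Fin (k+2), if IsDoor L s j then (1:ZMod 2) else 0 := by
            refine Finset.sum_congr rfl fun j _ => ?_
            exact if_congr Iff.rfl rfl rfl
    have step2 : ∑ p : SimpT (k+1) N × Fin (k+2), (if IsDoor L p.1 p.2 then (1:ZMod 2) else 0)
        = ∑ p ∈ Finset.univ.filter
            (fun p : SimpT (k+1) N × Fin (k+2) => IsDoor L p.1 p.2), (1:ZMod 2) :=
      (Finset.sum_filter _ _).symm
    have step3 := Finset.sum_filter_add_sum_filter_not
      (Finset.univ.filter (fun p : SimpT (k+1) N × Fin (k+2) => IsDoor L p.1 p.2))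
      (fun p => (p.2 = Fin.last (k+1) ∧ (p.1.1 (p.1.2.symm (Fin.last k)) : ℕ) = 0))
      (fun _ => (1:ZMod 2))
    rw [step1, step2, ← step3, boundary_sum L hN h1, middle_sum_zero L h0, add_zero]
    exact IH hN (resL L) (resL_h1 L h1) (resL_h0 L h1 h0)

end CubeSperner

namespace CubeSperner

open Classical in
theorem exists_rainbow (m N : ℕ) (hN : 0 < N) (L : (Fin m → ℕ) → Fin (m+1))
    (h1 : ∀ x : Fin m → ℕ, (∀ d, x d ≤ N) → ∀ d : Fin m, x d = 0 → L x ≠ Fin.succ d)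
    (h0 : ∀ x : Fin m → ℕ, (∀ d, x d ≤ N) → (∃ d, x d = N) → L x ≠ 0) :
    ∃ w : Fin (m+1) → (Fin m → ℕ), (∀ j d, w j d ≤ N) ∧
      (∀ j j' d, w j d ≤ w j' d + 1) ∧ Function.Surjective (fun j => L (w j)) := by
  have hc := count_eq_one m hN L h1 h0
  have hex : ∃ s : SimpT m N, Function.Surjective (fun j => L (vert s j)) := by
    by_contra hcon
    push_neg at hcon
    have hzero : count m N L = 0 :=
      Finset.sum_eq_zero (fun s _ => by unfold rbInd; exact if_neg (hcon s))
    rw [hzero] at hc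
    exact absurd hc (by decide)
  obtain ⟨s, hs⟩ := hex
  refine ⟨vert s, fun j d => vert_le s j d, ?_, hs⟩
  intro j j' d
  unfold vert
  split_ifs <;> omega

end CubeSperner


/-- Corollary 2.7: no `n`-disjoint, `R`-bounded families `V₁,…,V_k` in `(lℤ)^k`
(with the maximum metric) cover `[-R,R]^k ∩ (lℤ)^k`, when `n > 2l` and `R > n`. -/
theorem no_cover_of_cube_lZ (k n l : ℕ) (hl : 0 < l) (hn : 2 * l < n) (R : ℝ)
    (hR : (n : ℝ) < R) :
    ¬ ∃ V : Fin k → Set (Set {x : Fin k → ℤ // ∀ i, (l : ℤ) ∣ x i}),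
      (∀ i, RDisjoint (n : ℝ) (V i)) ∧ (∀ i, RBounded R (V i)) ∧
      {x : {x : Fin k → ℤ // ∀ i, (l : ℤ) ∣ x i} | ∀ i, |(x.1 i : ℝ)| ≤ R} ⊆
        ⋃ i, ⋃₀ V i := by
  classical
  rintro ⟨V, hdisj, hbound, hcover⟩
  set M : ℕ := ⌊R / l⌋₊ with hMdef
  have hl0 : (0:ℝ) < l := by exact_mod_cast hl
  have hn0 : (0:ℝ) ≤ n := Nat.cast_nonneg n
  have hRpos : 0 < R := lt_of_le_of_lt hn0 hR
  have h2l : 2 * (l:ℝ) < n := by exact_mod_cast hn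
  have hlR : 2 * (l:ℝ) < R := lt_trans h2l hR
  have hMle : (M : ℝ) * l ≤ R := by
    have h := Nat.floor_le (le_of_lt (div_pos hRpos hl0))
    have h2 : (M:ℝ) * l ≤ (R / l) * l := mul_le_mul_of_nonneg_right h hl0.le
    rwa [div_mul_cancel₀ R (ne_of_gt hl0)] at h2
  have hMgt : R - l < (M:ℝ) * l := by
    have h := Nat.lt_floor_add_one (R / l)
    have h2 : R / l * l < ((M:ℝ)+1) * l := mul_lt_mul_of_pos_right h hl0
    rw [div_mul_cancel₀ R (ne_of_gt hl0)] at h2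
    linarith
  have hM1 : 0 < M := by
    by_contra hc
    push_neg at hc
    have : M = 0 := by omega
    rw [this] at hMgt
    simp at hMgt
    linarith
  set N : ℕ := 2 * M with hNdef
  have hN : 0 < N := by omega
  -- grid points
  set z : (Fin k → ℕ) → {x : Fin k → ℤ // ∀ i, (l : ℤ) ∣ x i} := fun y =>
    ⟨fun i => (l:ℤ) * ((y i : ℤ) - (M:ℤ)), fun i => ⟨_, rfl⟩⟩ with hz
  have hz_cube : ∀ y : Fin k → ℕ, (∀ d, y d ≤ N) → ∀ i, |((z y).1 i : ℝ)| ≤ R := by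
    intro y hy i
    have hyi := hy i
    show |((((l:ℤ) * ((y i : ℤ) - (M:ℤ))) : ℤ) : ℝ)| ≤ R
    push_cast
    rw [abs_mul, abs_of_nonneg hl0.le]
    have habs : |(y i : ℝ) - M| ≤ M := by
      rw [abs_le]
      constructor
      · have : (y i : ℝ) ≥ 0 := Nat.cast_nonneg _
        linarith
      · have : (y i : ℝ) ≤ 2 * M := by
          have : (y i : ℕ) ≤ 2 * M := hyi
          exact_mod_cast this
        linarith
    calc (l:ℝ) * |(y i : ℝ) - M| ≤ (l:ℝ) * M := by
          exact mul_le_mul_of_nonneg_left habs hl0.le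
      _ = (M:ℝ) * l := by ring
      _ ≤ R := hMle
  have hcov : ∀ y : Fin k → ℕ, (∀ d, y d ≤ N) → ∃ i A, A ∈ V i ∧ z y ∈ A := by
    intro y hy
    have hmem := hcover (show z y ∈ {x : {x : Fin k → ℤ // ∀ i, (l : ℤ) ∣ x i} | ∀ i, |(x.1 i : ℝ)| ≤ R} from fun i => hz_cube y hy i)
    rw [Set.mem_iUnion] at hmem
    obtain ⟨i, hi⟩ := hmem
    rw [Set.mem_sUnion] at hi
    obtain ⟨A, hA, hzA⟩ := hi
    exact ⟨i, A, hA, hzA⟩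
  choose fam Aset hAmem hzmem using hcov
  -- the label of a set
  set labf : Set {x : Fin k → ℤ // ∀ i, (l : ℤ) ∣ x i} → Fin (k+1) := fun A =>
    if hex : ∃ d : Fin k, ∀ p ∈ A, p.1 d ≠ -((M:ℤ) * l) then Fin.succ (Classical.choose hex)
    else 0 with hlabf
  set L : (Fin k → ℕ) → Fin (k+1) := fun y =>
    if h : (∀ d, y d ≤ N) then labf (Aset y h) else 0 with hL
  have h1 : ∀ y : Fin k → ℕ, (∀ d, y d ≤ N) → ∀ d : Fin k, y d = 0 → L y ≠ Fin.succ d := by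
    intro y hy d hyd
    have hzd : (z y).1 d = -((M:ℤ) * l) := by
      show (l:ℤ) * ((y d : ℤ) - M) = _
      rw [hyd]
      push_cast
      ring
    simp only [hL, hlabf]
    rw [dif_pos hy]
    by_cases hex : ∃ d' : Fin k, ∀ p ∈ Aset y hy, p.1 d' ≠ -((M:ℤ) * l)
    · rw [dif_pos hex]
      intro hc
      have hd' := Classical.choose_spec hex
      have : Classical.choose hex = d := Fin.succ_injective _ hc
      rw [this] at hd'
      exact hd' (z y) (hzmem y hy) hzd
    · rw [dif_neg hex]
      exact (Fin.succ_ne_zero d).symm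
  have h0 : ∀ y : Fin k → ℕ, (∀ d, y d ≤ N) → (∃ d, y d = N) → L y ≠ 0 := by
    rintro y hy ⟨d, hyd⟩
    simp only [hL, hlabf]
    rw [dif_pos hy]
    by_cases hex : ∃ d' : Fin k, ∀ p ∈ Aset y hy, p.1 d' ≠ -((M:ℤ) * l)
    · rw [dif_pos hex]
      exact Fin.succ_ne_zero _
    · exfalso
      push_neg at hex
      obtain ⟨p, hpA, hpd⟩ := hex d
      have hzd : (z y).1 d = (M:ℤ) * l := by
        show (l:ℤ) * ((y d : ℤ) - M) = _
        rw [hyd]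
        push_cast [hNdef]
        ring
      have hcoord : dist (p.1 d) ((z y).1 d) = 2 * (M:ℝ) * l := by
        rw [Int.dist_eq, hpd, hzd]
        push_cast
        rw [show (-((M:ℝ) * l) - (M:ℝ) * l) = -(2 * M * l) by ring, abs_neg,
          abs_of_nonneg (by positivity)]
      have hle1 : dist (p.1 d) ((z y).1 d) ≤ dist p.1 (z y).1 := dist_le_pi_dist p.1 (z y).1 d
      have hle2 : dist p (z y) ≤ R :=
        hbound (fam y hy) (Aset y hy) (hAmem y hy) p hpA (z y) (hzmem y hy)
      rw [Subtype.dist_eq] at hle2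
      rw [hcoord] at hle1
      linarith
  obtain ⟨w, hwle, hwadj, hwsurj⟩ := CubeSperner.exists_rainbow k N hN L h1 h0
  have hinj : Function.Injective (fun j => L (w j)) :=
    Finite.injective_iff_surjective.2 hwsurj
  have hcard : Fintype.card (Fin k) < Fintype.card (Fin (k+1)) := by simp
  obtain ⟨j, j', hjj, hfam⟩ := Fintype.exists_ne_map_eq_of_card_lt
    (fun j : Fin (k+1) => fam (w j) (hwle j)) hcard
  by_cases hAeq : Aset (w j) (hwle j) = Aset (w j') (hwle j')
  · apply hjj
    apply hinj
    show L (w j) = L (w j')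
    simp only [hL]
    rw [dif_pos (hwle j), dif_pos (hwle j'), hAeq]
  · have hd := hdisj (fam (w j) (hwle j)) _ (hAmem (w j) (hwle j)) _
      (by rw [hfam]; exact hAmem (w j') (hwle j')) hAeq (z (w j)) (hzmem _ _)
      (z (w j')) (hzmem _ _)
    have hdle : dist (z (w j)) (z (w j')) ≤ (l:ℝ) := by
      rw [Subtype.dist_eq]
      refine (dist_pi_le_iff hl0.le).2 ?_
      intro b
      show dist ((l:ℤ) * ((w j b : ℤ) - M)) ((l:ℤ) * ((w j' b : ℤ) - M)) ≤ (l:ℝ)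
      rw [Int.dist_eq]
      push_cast
      rw [show ((l:ℝ) * ((w j b : ℝ) - M) - (l:ℝ) * ((w j' b : ℝ) - M))
        = (l:ℝ) * ((w j b : ℝ) - (w j' b : ℝ)) by ring, abs_mul, abs_of_nonneg hl0.le]
      have ha1 : (w j b : ℝ) ≤ (w j' b : ℝ) + 1 := by exact_mod_cast hwadj j j' b
      have ha2 : (w j' b : ℝ) ≤ (w j b : ℝ) + 1 := by exact_mod_cast hwadj j' j b
      have habs : |(w j b : ℝ) - (w j' b : ℝ)| ≤ 1 := abs_le.2 ⟨by linarith, by linarith⟩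
      calc (l:ℝ) * |(w j b : ℝ) - (w j' b : ℝ)| ≤ (l:ℝ) * 1 :=
            mul_le_mul_of_nonneg_left habs hl0.le
        _ = l := by ring
    have : (n:ℝ) ≤ (l:ℝ) := le_trans hd hdle
    linarith
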